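/- Let A be a real n×n matrix and r, δ₁, δ₂ ∈ ℝⁿ with A δ₁ and A δ₂ linearly independent. Let W be the 2×2 Gram matrix W_A(δ₁, δ₂), v = (⟨r, A δ₁⟩, ⟨r, A δ₂⟩)ᵀ, (β₁, β₂)ᵀ = W⁻¹ v, and r' = r − β₁ A δ₁ − β₂ A δ₂. Then ‖r'‖² ≤ ‖r‖² − (⟨r, A δ₁⟩² + ⟨r, A δ₂⟩²) / (‖A δ₁‖² + ‖A δ₂‖²). -/

import Mathlib

open Matrix
open scoped RealInnerProductSpace

/-- Action of a real matrix on Euclidean space. -/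
noncomputable def mulE {m n : ℕ} (M : Matrix (Fin m) (Fin n) ℝ)
    (x : EuclideanSpace ℝ (Fin n)) : EuclideanSpace ℝ (Fin m) :=
  Matrix.toEuclideanLin M x

/-- The 2×2 Gram matrix `W_A(x, y)`. -/
noncomputable def gram {n : ℕ} (A : Matrix (Fin n) (Fin n) ℝ)
    (x y : EuclideanSpace ℝ (Fin n)) : Matrix (Fin 2) (Fin 2) ℝ :=
  !![⟪mulE A x, mulE A x⟫, ⟪mulE A y, mulE A x⟫;
     ⟪mulE A x, mulE A y⟫, ⟪mulE A y, mulE A y⟫]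

/-! Since `β` solves the normal equations `W β = v`, the residual `r'` is orthogonal to `A δ₁` and
`A δ₂`, so `r'` is the shortest vector of the form `r - c₁ A δ₁ - c₂ A δ₂`. Compare it with the
steepest-descent step `r - t⁻¹ w`, where `w = ⟨r, A δ₁⟩ A δ₁ + ⟨r, A δ₂⟩ A δ₂` and
`t = ‖A δ₁‖² + ‖A δ₂‖²`: Cauchy–Schwarz gives `‖w‖² ≤ t ⟨r, w⟩`, and expanding the square yields
`‖r - t⁻¹ w‖² ≤ ‖r‖² - ⟨r, w⟩ / t`. The argument works verbatim for any finite family of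
directions. -/

section LeastSquares

variable {E : Type*} [NormedAddCommGroup E] [InnerProductSpace ℝ E] {ι : Type*} [Fintype ι]

theorem gram_mulVec_inv_mulVec_of_linearIndependent [DecidableEq ι] {u : ι → E}
    (hu : LinearIndependent ℝ u) (v : ι → ℝ) :
    Matrix.gram ℝ u *ᵥ ((Matrix.gram ℝ u)⁻¹ *ᵥ v) = v := by
  have hdet := (isUnit_iff_isUnit_det _).mp (posDef_gram_of_linearIndependent hu).isUnit
  rw [mulVec_mulVec, mul_nonsing_inv _ hdet, one_mulVec]

theorem inner_sub_sum_smul_eq_zero_of_gram_mulVec_eq {u : ι → E} {r : E} {β : ι → ℝ}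
    (hβ : Matrix.gram ℝ u *ᵥ β = fun i ↦ ⟪u i, r⟫) (i : ι) :
    ⟪u i, r - ∑ j, β j • u j⟫ = 0 := by
  have hi := congrFun hβ i
  simp only [mulVec, dotProduct, Matrix.gram_apply] at hi
  rw [inner_sub_right, inner_sum, ← hi]
  simp [real_inner_smul_right, mul_comm]

theorem norm_sub_sum_smul_sq_le_of_inner_eq_zero {u : ι → E} {r : E} {β : ι → ℝ}
    (hβ : ∀ i, ⟪u i, r - ∑ j, β j • u j⟫ = 0) (c : ι → ℝ) :
    ‖r - ∑ i, β i • u i‖ ^ 2 ≤ ‖r - ∑ i, c i • u i‖ ^ 2 := by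
  have hdecomp : r - ∑ i, c i • u i = (r - ∑ i, β i • u i) + ∑ i, (β i - c i) • u i := by
    simp only [sub_smul, Finset.sum_sub_distrib]
    abel
  have horth : ⟪r - ∑ i, β i • u i, ∑ i, (β i - c i) • u i⟫ = 0 := by
    rw [inner_sum]
    exact Finset.sum_eq_zero fun i _ ↦ by rw [real_inner_smul_right, real_inner_comm, hβ, mul_zero]
  rw [hdecomp, norm_add_sq_real, horth]
  linarith [sq_nonneg ‖∑ i, (β i - c i) • u i‖]

theorem norm_sum_smul_sq_le (a : ι → ℝ) (u : ι → E) :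
    ‖∑ i, a i • u i‖ ^ 2 ≤ (∑ i, a i ^ 2) * ∑ i, ‖u i‖ ^ 2 := by
  have htri : ‖∑ i, a i • u i‖ ≤ ∑ i, |a i| * ‖u i‖ :=
    (norm_sum_le _ _).trans_eq (by simp [norm_smul])
  calc ‖∑ i, a i • u i‖ ^ 2 ≤ (∑ i, |a i| * ‖u i‖) ^ 2 := by gcongr
    _ ≤ (∑ i, |a i| ^ 2) * ∑ i, ‖u i‖ ^ 2 := Finset.sum_mul_sq_le_sq_mul_sq _ _ _
    _ = (∑ i, a i ^ 2) * ∑ i, ‖u i‖ ^ 2 := by simp only [sq_abs]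

-- No sign condition on `t`: for `t = 0` both sides are `‖r‖ ^ 2`, as `0⁻¹ = 0`.
theorem norm_sub_inv_smul_sq_le {r w : E} {t : ℝ} (h : ‖w‖ ^ 2 ≤ t * ⟪r, w⟫) :
    ‖r - t⁻¹ • w‖ ^ 2 ≤ ‖r‖ ^ 2 - ⟪r, w⟫ / t := by
  have hscale : t⁻¹ ^ 2 * ‖w‖ ^ 2 ≤ t⁻¹ * ⟪r, w⟫ := by
    calc t⁻¹ ^ 2 * ‖w‖ ^ 2 ≤ t⁻¹ ^ 2 * (t * ⟪r, w⟫) := by gcongr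
      _ = t⁻¹ * ⟪r, w⟫ := by
        rcases eq_or_ne t 0 with rfl | ht
        · simp
        · field_simp
  rw [norm_sub_sq_real, real_inner_smul_right, norm_smul, mul_pow, Real.norm_eq_abs, sq_abs,
    div_eq_inv_mul]
  linarith

theorem norm_sub_sum_smul_sq_le_of_gram_mulVec_eq {u : ι → E} {r : E} {β : ι → ℝ}
    (hβ : Matrix.gram ℝ u *ᵥ β = fun i ↦ ⟪u i, r⟫) :
    ‖r - ∑ i, β i • u i‖ ^ 2 ≤
      ‖r‖ ^ 2 - (∑ i, ⟪r, u i⟫ ^ 2) / ∑ i, ‖u i‖ ^ 2 := by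
  set t := ∑ i, ‖u i‖ ^ 2
  set w := ∑ i, ⟪r, u i⟫ • u i
  have hrw : ⟪r, w⟫ = ∑ i, ⟪r, u i⟫ ^ 2 := by
    simp [w, inner_sum, real_inner_smul_right, sq]
  have hw : ‖w‖ ^ 2 ≤ t * ⟪r, w⟫ := by
    rw [hrw, mul_comm]
    exact norm_sum_smul_sq_le _ _
  have hstep : r - t⁻¹ • w = r - ∑ i, (t⁻¹ * ⟪r, u i⟫) • u i := by
    simp [w, Finset.smul_sum, mul_smul]
  calc ‖r - ∑ i, β i • u i‖ ^ 2 ≤ ‖r - t⁻¹ • w‖ ^ 2 := by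
        rw [hstep]
        exact norm_sub_sum_smul_sq_le_of_inner_eq_zero
          (inner_sub_sum_smul_eq_zero_of_gram_mulVec_eq hβ) _
    _ ≤ ‖r‖ ^ 2 - ⟪r, w⟫ / t := norm_sub_inv_smul_sq_le hw
    _ = _ := by rw [hrw]

end LeastSquares

/-- If `A δ₁`, `A δ₂` are linearly independent, the two-dimensional minimum residual update
`r' = r − β₁ A δ₁ − β₂ A δ₂` with `(β₁, β₂)ᵀ = W_A(δ₁,δ₂)⁻¹ v` satisfies
`‖r'‖² ≤ ‖r‖² − (⟨r, Aδ₁⟩² + ⟨r, Aδ₂⟩²) / (‖Aδ₁‖² + ‖Aδ₂‖²)`. -/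
theorem stmt4 {n : ℕ} (A : Matrix (Fin n) (Fin n) ℝ)
    (r δ1 δ2 : EuclideanSpace ℝ (Fin n))
    (hind : LinearIndependent ℝ ![mulE A δ1, mulE A δ2])
    (W : Matrix (Fin 2) (Fin 2) ℝ) (hW : W = gram A δ1 δ2)
    (v : Fin 2 → ℝ) (hv : v = ![⟪r, mulE A δ1⟫, ⟪r, mulE A δ2⟫])
    (β : Fin 2 → ℝ) (hβ : β = W⁻¹.mulVec v)
    (r' : EuclideanSpace ℝ (Fin n))
    (hr' : r' = r - β 0 • mulE A δ1 - β 1 • mulE A δ2) :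
    ‖r'‖ ^ 2 ≤ ‖r‖ ^ 2 -
      (⟪r, mulE A δ1⟫ ^ 2 + ⟪r, mulE A δ2⟫ ^ 2) / (‖mulE A δ1‖ ^ 2 + ‖mulE A δ2‖ ^ 2) := by
  set u : Fin 2 → EuclideanSpace ℝ (Fin n) := ![mulE A δ1, mulE A δ2]
  have hWu : W = Matrix.gram ℝ u := by
    ext i j
    fin_cases i <;> fin_cases j <;> simp [hW, _root_.gram, Matrix.gram_apply, u, real_inner_comm]
  have hvu : v = fun i ↦ ⟪u i, r⟫ := by
    ext i
    fin_cases i <;> simp [hv, u, real_inner_comm]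
  have hnormal : Matrix.gram ℝ u *ᵥ β = fun i ↦ ⟪u i, r⟫ := by
    rw [hβ, hWu, hvu]
    exact gram_mulVec_inv_mulVec_of_linearIndependent hind _
  rw [hr', sub_sub]
  simpa [Fin.sum_univ_two, u] using norm_sub_sum_smul_sq_le_of_gram_mulVec_eq hnormal
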